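/- Let Θ be a finite set with Θ ∩ {⊥,⊤} = ∅, let p, q ∈ P, and let π, π' ∈ Π_{p,q}. There exists a CFM over P and the alphabet Σ × (Θ × (Θ ∪ {⊥,⊤})) whose language is exactly the set of extended MSCs (M, ξ), with ξ(e) = (ξ₁(e), ξ₂(e)) ∈ Θ × (Θ ∪ {⊥,⊤}), such that for all events e ∈ E_q, ξ₂(e) = ξ₁(f_{π,π'}(e)), where ξ₁(⊥) := ⊥ and ξ₁(⊤) := ⊤. -/

import Mathlib

namespace Gossip

/-- Events extended with bottom and top elements. -/
inductive ExtEv (E : Type) : Type where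
  | bot : ExtEv E
  | evt (e : E) : ExtEv E
  | top : ExtEv E

/-- A message sequence chart (MSC) over processes `P`, alphabet `A`,
with (finite, nonempty) set of events `E`. -/
structure MSC (P A E : Type) : Type where
  fintypeE : Fintype E
  nonemptyE : Nonempty E
  loc : E → P
  lab : E → A
  /-- process successor relation `→` -/
  next : E → E → Prop
  /-- message relation `◁` -/
  msg : E → E → Prop
  next_loc : ∀ {e f : E}, next e f → loc e = loc f
  next_irrefl : ∀ e : E, ¬ next e e
  next_right_unique : ∀ {e f f' : E}, next e f → next e f' → f = f'
  next_left_unique : ∀ {e e' f : E}, next e f → next e' f → e = e'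
  next_total : ∀ e f : E, loc e = loc f →
      Relation.ReflTransGen next e f ∨ Relation.ReflTransGen next f e
  msg_loc : ∀ {e f : E}, msg e f → loc e ≠ loc f
  /-- every event belongs to at most one pair of `◁` -/
  msg_unique : ∀ {e f e' f' : E}, msg e f → msg e' f' →
      (e = e' ∨ e = f' ∨ f = e' ∨ f = f') → e = e' ∧ f = f'
  fifo : ∀ {e f e' f' : E}, msg e f → msg e' f' → loc e = loc e' → loc f = loc f' →
      (Relation.ReflTransGen next e e' ↔ Relation.ReflTransGen next f f')
  /-- `≤ = (→ ∪ ◁)*` is a partial order -/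
  causal_antisymm : ∀ {e f : E},
      Relation.ReflTransGen (fun x y => next x y ∨ msg x y) e f →
      Relation.ReflTransGen (fun x y => next x y ∨ msg x y) f e → e = f

namespace MSC

variable {P A E B : Type}

/-- the causal order `≤ = (→ ∪ ◁)*` -/
def le (M : MSC P A E) : E → E → Prop :=
  Relation.ReflTransGen (fun x y => M.next x y ∨ M.msg x y)

/-- the strict causal order `<` -/
def lt (M : MSC P A E) (e f : E) : Prop := M.le e f ∧ e ≠ f

/-- `→*` -/
def nextStar (M : MSC P A E) : E → E → Prop := Relation.ReflTransGen M.next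

/-- the causal order extended to `E ∪ {⊥,⊤}` with `⊥ < e < ⊤` -/
def extLe (M : MSC P A E) : ExtEv E → ExtEv E → Prop
  | .bot, _ => True
  | _, .top => True
  | .evt e, .evt f => M.le e f
  | _, _ => False

def extLt (M : MSC P A E) (x y : ExtEv E) : Prop := M.extLe x y ∧ x ≠ y

/-- replace the labelling of an MSC (e.g. to pair it with an extra labelling) -/
def relabel (M : MSC P A E) (μ : E → B) : MSC P B E where
  fintypeE := M.fintypeE
  nonemptyE := M.nonemptyE
  loc := M.loc
  lab := μ
  next := M.next
  msg := M.msg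
  next_loc := M.next_loc
  next_irrefl := M.next_irrefl
  next_right_unique := M.next_right_unique
  next_left_unique := M.next_left_unique
  next_total := M.next_total
  msg_loc := M.msg_loc
  msg_unique := M.msg_unique
  fifo := M.fifo
  causal_antisymm := M.causal_antisymm

end MSC

/-- letters of path expressions: `→`, `→*`, `p▷q`, `⟨a⟩` -/
inductive PathLetter (P A : Type) : Type where
  | next : PathLetter P A
  | nextStar : PathLetter P A
  | msg (p q : P) : PathLetter P A
  | lab (a : A) : PathLetter P A

/-- path expressions: finite words over `Γ` -/
abbrev PathExpr (P A : Type) := List (PathLetter P A)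

variable {P A E : Type}

def letterSem (M : MSC P A E) : PathLetter P A → E → E → Prop
  | .next => M.next
  | .nextStar => M.nextStar
  | .msg p q => fun e f => M.loc e = p ∧ M.loc f = q ∧ M.msg e f
  | .lab a => fun e f => e = f ∧ M.lab e = a

/-- `⟦π⟧` -/
def pathSem (M : MSC P A E) : PathExpr P A → E → E → Prop
  | [] => fun e f => e = f
  | l :: π => fun e g => ∃ f, letterSem M l e f ∧ pathSem M π f g

def letterComp : PathLetter P A → P → P → Prop
  | .msg p q => fun x y => x = p ∧ y = q
  | _ => fun x y => x = y

/-- `Comp(π)`; `π ∈ Π_{p,q}` iff `pcomp π p q` -/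
def pcomp : PathExpr P A → P → P → Prop
  | [] => fun x y => x = y
  | l :: π => fun x z => ∃ y, letterComp l x y ∧ pcomp π y z

/-- `IsLast M π e x` holds iff `x = last_π(e)` (with `x = ⊥` iff no `π`-path into `e`). -/
def IsLast (M : MSC P A E) (π : PathExpr P A) (e : E) : ExtEv E → Prop
  | .bot => ∀ f, ¬ pathSem M π f e
  | .evt g => pathSem M π g e ∧ ∀ f, pathSem M π f e → M.le f g
  | .top => False

/-- `IsFirst M π e x` holds iff `x = first_π(e)` (with `x = ⊤` iff no `π`-path out of `e`). -/
def IsFirst (M : MSC P A E) (π : PathExpr P A) (e : E) : ExtEv E → Prop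
  | .top => ∀ f, ¬ pathSem M π e f
  | .evt g => pathSem M π e g ∧ ∀ f, pathSem M π e f → M.le g f
  | .bot => False

/-- `IsFa M π π' e x` holds iff `x = f_{π,π'}(e) = first_{π'}(last_π(e))`, with
`first_{π'}(⊥) := ⊥`. -/
def IsFa (M : MSC P A E) (π π' : PathExpr P A) (e : E) (x : ExtEv E) : Prop :=
  (IsLast M π e ExtEv.bot ∧ x = ExtEv.bot) ∨
    ∃ g, IsLast M π e (ExtEv.evt g) ∧ IsFirst M π' g x

/-- `IsLastProc M p e x` holds iff `x = last_p(e)`, the maximal event of process `p`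
strictly below `e` (`⊥` if none). -/
def IsLastProc (M : MSC P A E) (p : P) (e : E) : ExtEv E → Prop
  | .bot => ∀ f, M.loc f = p → ¬ M.lt f e
  | .evt g => M.loc g = p ∧ M.lt g e ∧ ∀ f, M.loc f = p → M.lt f e → M.le f g
  | .top => False

/-- `π ≼_e π'`, i.e. `last_π(e) ≤ last_{π'}(e)` -/
def ple (M : MSC P A E) (π π' : PathExpr P A) (e : E) : Prop :=
  ∃ x y, IsLast M π e x ∧ IsLast M π' e y ∧ M.extLe x y

def gossipSuffix : P → List P → PathExpr P A
  | _, [] => []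
  | p, q :: w => PathLetter.msg p q :: PathLetter.nextStar :: gossipSuffix q w

/-- `π_w` for `w = p :: rest` -/
def gossipExpr (p : P) (w : List P) : PathExpr P A :=
  match w with
  | [] => [PathLetter.next, PathLetter.nextStar]
  | _ :: _ => PathLetter.nextStar :: gossipSuffix p w

/-- `π ∈ Π^gossip` -/
def IsGossip (π : PathExpr P A) : Prop :=
  ∃ (p : P) (w : List P), (p :: w).Nodup ∧ π = gossipExpr p w

/-- actions of a CFM transition -/
inductive CAct (P A Msg : Type) : Type where
  | internal (a : A) : CAct P A Msg
  | send (a : A) (m : Msg) (q : P) : CAct P A Msg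
  | recv (a : A) (m : Msg) (q : P) : CAct P A Msg

def CAct.labelOf {P A Msg : Type} : CAct P A Msg → A
  | .internal a => a
  | .send a _ _ => a
  | .recv a _ _ => a

/-- a communicating finite-state machine over `P` and `A` -/
structure CFM (P A : Type) : Type 1 where
  Msg : Type
  msgFin : Fintype Msg
  S : Type
  sFin : Fintype S
  ι : P → S
  Δ : P → Set (S × CAct P A Msg × S)
  Acc : Set (P → S)
  wf_send : ∀ p s a m q s', (s, CAct.send a m q, s') ∈ Δ p → q ≠ p
  wf_recv : ∀ p s a m q s', (s, CAct.recv a m q, s') ∈ Δ p → q ≠ p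

namespace CFM

variable {P A E : Type}

/-- `ρ` is a run of the CFM `C` on the MSC `M` -/
def IsRun (C : CFM P A) (M : MSC P A E) (ρ : E → C.S × CAct P A C.Msg × C.S) : Prop :=
  (∀ e, ρ e ∈ C.Δ (M.loc e)) ∧
  (∀ e, ((ρ e).2.1).labelOf = M.lab e) ∧
  (∀ e, (¬ ∃ f, M.next f e) → (ρ e).1 = C.ι (M.loc e)) ∧
  (∀ e f, M.next e f → (ρ e).2.2 = (ρ f).1) ∧
  (∀ e, (¬ ∃ f, M.msg e f) → (¬ ∃ f, M.msg f e) → ∃ a, (ρ e).2.1 = CAct.internal a) ∧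
  (∀ e f, M.msg e f → ∃ m, (ρ e).2.1 = CAct.send (M.lab e) m (M.loc f) ∧
      (ρ f).2.1 = CAct.recv (M.lab f) m (M.loc e))

/-- the run `ρ` is accepting -/
def IsAccepting (C : CFM P A) (M : MSC P A E)
    (ρ : E → C.S × CAct P A C.Msg × C.S) : Prop :=
  ∃ s : P → C.S, s ∈ C.Acc ∧ ∀ p,
    ((∃ e, M.loc e = p) → ∃ e, M.loc e = p ∧ (¬ ∃ f, M.next e f) ∧ s p = (ρ e).2.2) ∧
    ((¬ ∃ e, M.loc e = p) → s p = C.ι p)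

/-- `M ∈ L(C)` -/
def Accepts (C : CFM P A) (M : MSC P A E) : Prop :=
  ∃ ρ, C.IsRun M ρ ∧ C.IsAccepting M ρ

/-- deterministic CFMs -/
def Deterministic (C : CFM P A) : Prop :=
  ∀ p s γ₁ s₁ γ₂ s₂, (s, γ₁, s₁) ∈ C.Δ p → (s, γ₂, s₂) ∈ C.Δ p →
    CAct.labelOf γ₁ = CAct.labelOf γ₂ →
    ((∀ a₁ a₂, γ₁ = CAct.internal a₁ → γ₂ = CAct.internal a₂ → s₁ = s₂) ∧
     (∀ a₁ m₁ a₂ m₂ q, γ₁ = CAct.send a₁ m₁ q → γ₂ = CAct.send a₂ m₂ q →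
        s₁ = s₂ ∧ m₁ = m₂) ∧
     (∀ a₁ a₂ m q, γ₁ = CAct.recv a₁ m q → γ₂ = CAct.recv a₂ m q → s₁ = s₂))

end CFM

/-- acceptance of the extended MSC `(M, ξ)` by a CFM over a product alphabet -/
def AcceptsExt {P A E Ξ : Type} (C : CFM P (A × Ξ)) (M : MSC P A E) (ξ : E → Ξ) : Prop :=
  C.Accepts (M.relabel fun e => (M.lab e, ξ e))

/-- apply `μ` to an extended event, sending both `⊥` and `⊤` to `none` -/
def extToOptMap {E Θ : Type} (μ : E → Θ) : ExtEv E → Option Θ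
  | .evt g => some (μ g)
  | _ => none

/-- apply `μ` to an extended event, preserving `⊥` and `⊤` -/
def extMap {E Θ : Type} (μ : E → Θ) : ExtEv E → ExtEv Θ
  | .bot => ExtEv.bot
  | .evt g => ExtEv.evt (μ g)
  | .top => ExtEv.top

/-- formulas of the temporal logic TL -/
inductive TL (P A : Type) : Type where
  | lab (a : A) : TL P A
  | proc (p : P) : TL P A
  | disj (φ ψ : TL P A) : TL P A
  | neg (φ : TL P A) : TL P A
  | co (φ : TL P A) : TL P A
  | tuntil (φ ψ : TL P A) : TL P A
  | tsince (φ ψ : TL P A) : TL P A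

/-- `M, e ⊨ φ` -/
def TLsat (M : MSC P A E) : TL P A → E → Prop
  | .lab a, e => M.lab e = a
  | .proc p, e => M.loc e = p
  | .disj φ ψ, e => TLsat M φ e ∨ TLsat M ψ e
  | .neg φ, e => ¬ TLsat M φ e
  | .co φ, e => ∃ f, ¬ M.le e f ∧ ¬ M.le f e ∧ TLsat M φ f
  | .tuntil φ ψ, e => ∃ f, M.lt e f ∧ TLsat M ψ f ∧ ∀ g, M.lt e g → M.lt g f → TLsat M φ g
  | .tsince φ ψ, e => ∃ f, M.lt f e ∧ TLsat M ψ f ∧ ∀ g, M.lt f g → M.lt g e → TLsat M φ g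

end Gossip

/-!
The values `ξ₁(first_τ(e))`, for the suffixes `τ` of `π'`, obey local recurrences: the value for
`l τ` at `e` is determined by the value for `τ` at `e`, the values for `τ` and `l τ` at the process
successor of `e`, and the value for `τ` at the receiver of its message. The case `l = →*` holds
because `first_τ` is monotone along a process, by FIFO. Reversing all arrows turns `last_σ` into
`first` of the reversed path, so the values `ξ₁(first_{π'}(last_σ(e)))`, for the prefixes `σ` of
`π`, obey the same recurrences towards the past; the one for `σ = π` is `ξ₁(f_{π,π'}(e))`.

The CFM guesses both vectors of values at every event and checks the recurrences locally: the past
vector travels along `→` and `◁`, while the future vectors of the successor and of the receiver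
are guessed and confirmed there. By well-founded induction on the causal order, the vectors of an
accepting run are the true ones, so comparing `ξ₂` with them on process `q` recognizes exactly the
required extended MSCs.
-/

namespace Gossip

variable {P A E : Type}

open Classical in
noncomputable def succOf (r : E → E → Prop) (e : E) : Option E :=
  if h : ∃ f, r e f then some h.choose else none

theorem succOf_eq_some {r : E → E → Prop} (hr : ∀ {e f f' : E}, r e f → r e f' → f = f')
    {e f : E} : succOf r e = some f ↔ r e f := by
  unfold succOf
  split_ifs with h
  · exact ⟨fun hf => Option.some_injective _ hf ▸ h.choose_spec,
      fun hf => congrArg some (hr h.choose_spec hf)⟩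
  · exact ⟨nofun, fun hf => (h ⟨f, hf⟩).elim⟩

theorem succOf_eq_none {r : E → E → Prop} {e : E} : succOf r e = none ↔ ∀ f, ¬ r e f := by
  unfold succOf
  split_ifs with h
  · exact ⟨nofun, fun hf => (hf _ h.choose_spec).elim⟩
  · exact ⟨fun _ f hf => h ⟨f, hf⟩, fun _ => rfl⟩

namespace MSC

variable (M : MSC P A E)

theorem le_antisymm {e f : E} : M.le e f → M.le f e → e = f := M.causal_antisymm

theorem le_trans {e f g : E} : M.le e f → M.le f g → M.le e g := Relation.ReflTransGen.trans

theorem le_of_nextStar {e f : E} (h : M.nextStar e f) : M.le e f :=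
  Relation.ReflTransGen.mono (fun _ _ => Or.inl) _ _ h

theorem lt_of_next {e f : E} (h : M.next e f) : M.lt e f :=
  ⟨.single (.inl h), by rintro rfl; exact M.next_irrefl e h⟩

theorem lt_of_msg {e f : E} (h : M.msg e f) : M.lt e f :=
  ⟨.single (.inr h), by rintro rfl; exact M.msg_loc h rfl⟩

theorem lt_trans {e f g : E} (hef : M.lt e f) (hfg : M.lt f g) : M.lt e g :=
  ⟨M.le_trans hef.1 hfg.1, by rintro rfl; exact hef.2 (M.le_antisymm hef.1 hfg.1)⟩

theorem wellFounded_lt : WellFounded M.lt :=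
  have := M.fintypeE
  have : IsTrans E M.lt := ⟨fun _ _ _ => M.lt_trans⟩
  have : Std.Irrefl M.lt := ⟨fun _ h => h.2 rfl⟩
  Finite.wellFounded_of_trans_of_irrefl _

theorem wellFounded_gt : WellFounded (Function.swap M.lt) :=
  have := M.fintypeE
  have : IsTrans E (Function.swap M.lt) := ⟨fun _ _ _ h h' => M.lt_trans h' h⟩
  have : Std.Irrefl (Function.swap M.lt) := ⟨fun _ h => h.2 rfl⟩
  Finite.wellFounded_of_trans_of_irrefl _

theorem loc_eq_of_nextStar {e f : E} (h : M.nextStar e f) : M.loc e = M.loc f := by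
  induction h with
  | refl => rfl
  | tail _ h ih => exact ih.trans (M.next_loc h)

theorem nextStar_of_next_of_nextStar {e e' f f' : E} (he : M.next e f) (he' : M.next e' f')
    (h : M.nextStar e' e) : M.nextStar f' f := by
  rcases h.cases_head with rfl | ⟨c, hc, hce⟩
  · exact M.next_right_unique he' he ▸ .refl
  · rw [M.next_right_unique he' hc]
    exact hce.tail he

theorem exists_last_of_loc {p : P} (h : ∃ e, M.loc e = p) :
    ∃ e, M.loc e = p ∧ ∀ f, ¬ M.next e f := by
  obtain ⟨e, he, hmax⟩ := M.wellFounded_gt.has_min {e | M.loc e = p} h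
  exact ⟨e, he, fun f hf => hmax f ((M.next_loc hf).symm.trans he) (M.lt_of_next hf)⟩

theorem eq_of_no_next {e e' : E} (he : ∀ f, ¬ M.next e f) (he' : ∀ f, ¬ M.next e' f)
    (h : M.loc e = M.loc e') : e = e' := by
  rcases M.next_total e e' h with h | h <;> rcases h.cases_head with h | ⟨c, hc, -⟩
  exacts [h, (he c hc).elim, h.symm, (he' c hc).elim]

/-- `M` with `→` and `◁` reversed: `last` in `M` is `first` in `M.dual`, and the successor and
receiver of an event in `M.dual` are its predecessor and sender in `M`. -/
def dual : MSC P A E where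
  fintypeE := M.fintypeE
  nonemptyE := M.nonemptyE
  loc := M.loc
  lab := M.lab
  next := Function.swap M.next
  msg := Function.swap M.msg
  next_loc h := (M.next_loc h).symm
  next_irrefl := M.next_irrefl
  next_right_unique h h' := M.next_left_unique h h'
  next_left_unique h h' := M.next_right_unique h h'
  next_total e f h := by
    simpa only [Relation.reflTransGen_swap, or_comm] using M.next_total e f h
  msg_loc h := (M.msg_loc h).symm
  msg_unique h h' hor := (M.msg_unique h h' (by tauto)).symm
  fifo h h' hl hl' := by
    simpa only [Relation.reflTransGen_swap] using (M.fifo h' h hl'.symm hl.symm).symm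
  causal_antisymm h h' :=
    M.causal_antisymm (Relation.reflTransGen_swap.mp h') (Relation.reflTransGen_swap.mp h)

theorem dual_le {e f : E} : M.dual.le e f ↔ M.le f e := Relation.reflTransGen_swap

noncomputable abbrev succ? : E → Option E := succOf M.next

noncomputable abbrev receiver? : E → Option E := succOf M.msg

variable {M}

theorem succ?_eq_some {e f : E} : M.succ? e = some f ↔ M.next e f :=
  succOf_eq_some (r := M.next) M.next_right_unique

theorem succ?_eq_none {e : E} : M.succ? e = none ↔ ∀ f, ¬ M.next e f := succOf_eq_none

theorem receiver?_eq_some {e f : E} : M.receiver? e = some f ↔ M.msg e f :=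
  succOf_eq_some (r := M.msg) fun h h' => (M.msg_unique h h' (.inl rfl)).2

theorem receiver?_eq_none {e : E} : M.receiver? e = none ↔ ∀ f, ¬ M.msg e f := succOf_eq_none

theorem receiver?_eq_none_of_msg {e f : E} (h : M.msg f e) : M.receiver? e = none :=
  succOf_eq_none.2 fun _ hg =>
    M.msg_loc h (congrArg M.loc (M.msg_unique hg h (.inr (.inl rfl))).1.symm)

end MSC

theorem pathSem_append (M : MSC P A E) (σ τ : PathExpr P A) {e g : E} :
    pathSem M (σ ++ τ) e g ↔ ∃ f, pathSem M σ e f ∧ pathSem M τ f g := by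
  induction σ generalizing e with
  | nil => exact ⟨fun h => ⟨e, rfl, h⟩, by rintro ⟨_, rfl, h⟩; exact h⟩
  | cons l σ ih =>
    simp only [List.cons_append, pathSem, ih]
    exact ⟨fun ⟨w, hl, f, h₁, h₂⟩ => ⟨f, ⟨w, hl, h₁⟩, h₂⟩,
      fun ⟨f, ⟨w, hl, h₁⟩, h₂⟩ => ⟨w, hl, f, h₁, h₂⟩⟩

theorem pathSem_singleton (M : MSC P A E) (l : PathLetter P A) {e f : E} :
    pathSem M [l] e f ↔ letterSem M l e f :=
  ⟨fun ⟨_, hl, hf⟩ => hf ▸ hl, fun hl => ⟨f, hl, rfl⟩⟩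

theorem pcomp_of_pathSem (M : MSC P A E) {τ : PathExpr P A} {e f : E} (h : pathSem M τ e f) :
    pcomp τ (M.loc e) (M.loc f) := by
  induction τ generalizing e with
  | nil => exact congrArg M.loc h
  | cons l τ ih =>
    obtain ⟨w, hl, hw⟩ := h
    refine ⟨M.loc w, ?_, ih hw⟩
    cases l with
    | next => exact M.next_loc hl
    | nextStar => exact M.loc_eq_of_nextStar hl
    | msg p q => exact ⟨hl.1, hl.2.1⟩
    | lab a => exact congrArg M.loc hl.1

theorem pcomp_right_unique {τ : PathExpr P A} {p q q' : P} (h : pcomp τ p q)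
    (h' : pcomp τ p q') : q = q' := by
  induction τ generalizing p with
  | nil => exact h.symm.trans h'
  | cons l τ ih =>
    obtain ⟨y, hy, h⟩ := h
    obtain ⟨y', hy', h'⟩ := h'
    have : y = y' := by
      cases l with
      | msg r s => exact hy.2.trans hy'.2.symm
      | _ => exact hy.symm.trans hy'
    exact ih (this ▸ h) h'

theorem loc_eq_of_pathSem (M : MSC P A E) {τ : PathExpr P A} {e f f' : E}
    (h : pathSem M τ e f) (h' : pathSem M τ e f') : M.loc f = M.loc f' :=
  pcomp_right_unique (pcomp_of_pathSem M h) (pcomp_of_pathSem M h')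

def PathLetter.dual : PathLetter P A → PathLetter P A
  | .next => .next
  | .nextStar => .nextStar
  | .msg p q => .msg q p
  | .lab a => .lab a

def PathExpr.dual (π : PathExpr P A) : PathExpr P A := (π.map PathLetter.dual).reverse

theorem letterSem_dual (M : MSC P A E) (l : PathLetter P A) {e f : E} :
    letterSem M.dual l.dual e f ↔ letterSem M l f e := by
  cases l with
  | next => rfl
  | nextStar => exact Relation.reflTransGen_swap
  | msg p q => exact ⟨fun ⟨h₁, h₂, h₃⟩ => ⟨h₂, h₁, h₃⟩, fun ⟨h₁, h₂, h₃⟩ => ⟨h₂, h₁, h₃⟩⟩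
  | lab a => exact ⟨fun ⟨h, ha⟩ => ⟨h.symm, h ▸ ha⟩, fun ⟨h, ha⟩ => ⟨h.symm, h ▸ ha⟩⟩

theorem pathSem_dual (M : MSC P A E) (π : PathExpr P A) {e f : E} :
    pathSem M.dual (PathExpr.dual π) e f ↔ pathSem M π f e := by
  induction π generalizing f with
  | nil => exact eq_comm
  | cons l π ih =>
    simp only [PathExpr.dual, List.map_cons, List.reverse_cons] at ih ⊢
    rw [pathSem_append]
    simp only [pathSem_singleton, ih, letterSem_dual]
    exact ⟨fun ⟨x, h₁, h₂⟩ => ⟨x, h₂, h₁⟩, fun ⟨x, h₁, h₂⟩ => ⟨x, h₂, h₁⟩⟩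

open Classical in
/-- The value of `first_{l τ}` at an event with label `a` on process `p`, from `here` (the value
of `first_τ` at the event), `succ` (the values of `first_{l τ}` and `first_τ` at its successor)
and `recv` (the process of its receiver and the value of `first_τ` there). -/
noncomputable def firstStep {V : Type} : PathLetter P A → A → P → Option V →
    Option (Option V × Option V) → Option (P × Option V) → Option V
  | .next, _, _, _, succ, _ => succ.bind Prod.snd
  | .nextStar, _, _, here, succ, _ => here.or (succ.bind Prod.fst)
  | .msg r s, _, p, _, _, recv => recv.bind fun c => if p = r ∧ c.1 = s then c.2 else none
  | .lab b, a, _, here, _, _ => if a = b then here else none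

theorem firstStep_map {V W : Type} (ν : V → W) (l : PathLetter P A) (a : A) (p : P)
    (here : Option V) (succ : Option (Option V × Option V)) (recv : Option (P × Option V)) :
    (firstStep l a p here succ recv).map ν = firstStep l a p (here.map ν)
      (succ.map (Prod.map (Option.map ν) (Option.map ν)))
      (recv.map (Prod.map id (Option.map ν))) := by
  cases l <;> cases succ <;> cases recv <;>
    simp only [firstStep, Option.map_or, Option.map_none, Option.map_some, Option.bind_none,
      Option.bind_some, Prod.map, id] <;> (try split_ifs) <;> rfl

/-- Entry `j` stands for `first_{τ.drop j}`, with `none` for `⊤`. -/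
abbrev FirstVec (τ : PathExpr P A) (V : Type) := Fin (τ.length + 1) → Option V

/-- The recurrences of `firstStep` for the vector `w` of an event with value `v`, label `a` and
process `p`, given the vectors of its successor and of its receiver. -/
def IsFirstVec {V : Type} (τ : PathExpr P A) (v : V) (a : A) (p : P)
    (succ : Option (FirstVec τ V)) (recv : Option (P × FirstVec τ V)) (w : FirstVec τ V) :
    Prop :=
  w (Fin.last _) = some v ∧ ∀ j : Fin τ.length,
    w j.castSucc = firstStep (τ.get j) a p (w j.succ) (succ.map fun u => (u j.castSucc, u j.succ))
      (recv.map fun c => (c.1, c.2 j.succ))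

theorem IsFirstVec.unique {V : Type} {τ : PathExpr P A} {v : V} {a : A} {p : P}
    {succ : Option (FirstVec τ V)} {recv : Option (P × FirstVec τ V)} {w w' : FirstVec τ V}
    (h : IsFirstVec τ v a p succ recv w) (h' : IsFirstVec τ v a p succ recv w') : w = w' := by
  funext j
  induction j using Fin.reverseInduction with
  | last => rw [h.1, h'.1]
  | cast j ih => rw [h.2 j, h'.2 j, ih]

/-- Reads `none` as `⊥` and `some none` as `⊤`. -/
def ofOption₂ {α : Type} : Option (Option α) → ExtEv α
  | none => .bot
  | some none => .top
  | some (some a) => .evt a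

theorem extMap_ofOption₂ {Θ : Type} (μ : E → Θ) (o : Option (Option E)) :
    extMap μ (ofOption₂ o) = ofOption₂ (o.map (Option.map μ)) := by
  rcases o with _ | _ | _ <;> rfl

namespace MSC

variable {V : Type} {M : MSC P A E} {τ : PathExpr P A}

theorem exists_pathSem_nextStar_of_nextStar {f f' u v : E} (hu : pathSem M τ f u)
    (hf : M.nextStar f' f) (hv : pathSem M τ f' v) :
    ∃ v', pathSem M τ f' v' ∧ M.nextStar v' u := by
  induction τ generalizing f f' u v with
  | nil => exact ⟨f', rfl, hu ▸ hf⟩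
  | cons l τ ih =>
    obtain ⟨w, hl, hw⟩ := hu
    obtain ⟨w', hl', hw'⟩ := hv
    cases l with
    | next =>
      obtain ⟨v', hv', hv'u⟩ := ih hw (M.nextStar_of_next_of_nextStar hl hl' hf) hw'
      exact ⟨v', ⟨w', hl', hv'⟩, hv'u⟩
    | nextStar => exact ⟨u, ⟨w, hf.trans hl, hw⟩, .refl⟩
    | lab b =>
      obtain ⟨rfl, -⟩ := hl
      obtain ⟨rfl, hb⟩ := hl'
      obtain ⟨v', hv', hv'u⟩ := ih hw hf hw'
      exact ⟨v', ⟨f', ⟨rfl, hb⟩, hv'⟩, hv'u⟩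
    | msg r s =>
      have hww' : M.nextStar w' w :=
        (M.fifo hl'.2.2 hl.2.2 (hl'.1.trans hl.1.symm) (hl'.2.1.trans hl.2.1.symm)).1 hf
      obtain ⟨v', hv', hv'u⟩ := ih hw hww' hw'
      exact ⟨v', ⟨w', hl', hv'⟩, hv'u⟩

theorem isFirst_evt_unique {e g g' : E} (h : IsFirst M τ e (.evt g))
    (h' : IsFirst M τ e (.evt g')) : g = g' :=
  M.le_antisymm (h.2 _ h'.1) (h'.2 _ h.1)

theorem exists_isFirst {e f : E} (hf : pathSem M τ e f) : ∃ g, IsFirst M τ e (.evt g) := by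
  obtain ⟨g, hg, hmin⟩ := M.wellFounded_lt.has_min {x | pathSem M τ e x} ⟨f, hf⟩
  refine ⟨g, hg, fun x hx => ?_⟩
  rcases M.next_total g x (loc_eq_of_pathSem M hg hx) with h | h
  · exact M.le_of_nextStar h
  · by_cases hxg : x = g
    · exact hxg ▸ .refl
    · exact (hmin x hx ⟨M.le_of_nextStar h, hxg⟩).elim

variable (M τ) in
open Classical in
noncomputable def first? (e : E) : Option E :=
  if h : ∃ g, IsFirst M τ e (.evt g) then some h.choose else none

theorem first?_eq_some {e g : E} : M.first? τ e = some g ↔ IsFirst M τ e (.evt g) := by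
  unfold first?
  split_ifs with h
  · exact ⟨fun hg => Option.some_injective _ hg ▸ h.choose_spec,
      fun hg => congrArg some (isFirst_evt_unique h.choose_spec hg)⟩
  · exact ⟨nofun, fun hg => (h ⟨g, hg⟩).elim⟩

theorem first?_eq_none {e : E} : M.first? τ e = none ↔ ∀ f, ¬ pathSem M τ e f := by
  unfold first?
  split_ifs with h
  · exact ⟨nofun, fun hf => (hf _ h.choose_spec.1).elim⟩
  · exact ⟨fun _ f hf => h (exists_isFirst hf), fun _ => rfl⟩

theorem first?_congr {σ : PathExpr P A} {e e' : E}
    (h : ∀ g, pathSem M σ e g ↔ pathSem M τ e' g) : M.first? σ e = M.first? τ e' := by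
  rcases hσ : M.first? σ e with _ | g
  · exact (first?_eq_none.2 fun f hf => first?_eq_none.1 hσ f ((h f).2 hf)).symm
  · obtain ⟨hg, hmin⟩ := first?_eq_some.1 hσ
    exact (first?_eq_some.2 ⟨(h g).1 hg, fun f hf => hmin f ((h f).2 hf)⟩).symm

theorem first?_nil (e : E) : M.first? [] e = some e :=
  first?_eq_some.2 ⟨rfl, fun _ hf => hf ▸ .refl⟩

theorem first?_le_of_nextStar {f f' g u : E} (hg : M.first? τ f' = some g)
    (hf : M.nextStar f' f) (hu : pathSem M τ f u) : M.le g u := by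
  obtain ⟨hg, hmin⟩ := first?_eq_some.1 hg
  obtain ⟨v, hv, hvu⟩ := exists_pathSem_nextStar_of_nextStar hu hf hg
  exact M.le_trans (hmin v hv) (M.le_of_nextStar hvu)

theorem first?_cons (l : PathLetter P A) (τ : PathExpr P A) (e : E) :
    M.first? (l :: τ) e = firstStep l (M.lab e) (M.loc e) (M.first? τ e)
      ((M.succ? e).map fun f => (M.first? (l :: τ) f, M.first? τ f))
      ((M.receiver? e).map fun f => (M.loc f, M.first? τ f)) := by
  cases l with
  | next =>
    rcases hs : M.succ? e with _ | f
    · exact first?_eq_none.2 fun _ ⟨w, hw, _⟩ => succ?_eq_none.1 hs w hw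
    · have hf := succ?_eq_some.1 hs
      exact first?_congr fun g =>
        ⟨fun ⟨w, hw, h⟩ => M.next_right_unique hw hf ▸ h, fun h => ⟨f, hf, h⟩⟩
  | nextStar =>
    rcases h₀ : M.first? τ e with _ | g
    · simp only [firstStep, Option.none_or]
      rcases hs : M.succ? e with _ | f
      · refine first?_eq_none.2 fun u ⟨x, hx, hxu⟩ => ?_
        rcases hx.cases_head with rfl | ⟨c, hc, -⟩
        exacts [first?_eq_none.1 h₀ u hxu, succ?_eq_none.1 hs c hc]
      · have hf := succ?_eq_some.1 hs
        refine first?_congr fun u =>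
          ⟨fun ⟨x, hx, hxu⟩ => ?_, fun ⟨x, hx, hxu⟩ => ⟨x, .head hf hx, hxu⟩⟩
        rcases hx.cases_head with rfl | ⟨c, hc, hcx⟩
        exacts [(first?_eq_none.1 h₀ u hxu).elim, ⟨x, M.next_right_unique hc hf ▸ hcx, hxu⟩]
    · exact first?_eq_some.2 ⟨⟨e, .refl, (first?_eq_some.1 h₀).1⟩,
        fun u ⟨x, hx, hxu⟩ => first?_le_of_nextStar h₀ hx hxu⟩
  | msg r s =>
    rcases hr : M.receiver? e with _ | f
    · exact first?_eq_none.2 fun _ ⟨w, hw, _⟩ => receiver?_eq_none.1 hr w hw.2.2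
    · have hf := receiver?_eq_some.1 hr
      simp only [firstStep, Option.map_some, Option.bind_some]
      split_ifs with hc
      · exact first?_congr fun g => ⟨fun ⟨w, hw, h⟩ => (M.msg_unique hw.2.2 hf (.inl rfl)).2 ▸ h,
          fun h => ⟨f, ⟨hc.1, hc.2, hf⟩, h⟩⟩
      · exact first?_eq_none.2 fun _ ⟨w, hw, _⟩ =>
          hc ⟨hw.1, (M.msg_unique hw.2.2 hf (.inl rfl)).2 ▸ hw.2.1⟩
  | lab b =>
    simp only [firstStep]
    split_ifs with hb
    · exact first?_congr fun g => ⟨fun ⟨w, hw, h⟩ => hw.1 ▸ h, fun h => ⟨e, ⟨rfl, hb⟩, h⟩⟩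
    · exact first?_eq_none.2 fun _ ⟨w, hw, _⟩ => hb (hw.1 ▸ hw.2)

noncomputable def firstVec (M : MSC P A E) (ν : E → V) (τ : PathExpr P A) (e : E) :
    FirstVec τ V :=
  fun j => (M.first? (τ.drop j) e).map ν

@[simp]
theorem firstVec_zero (ν : E → V) (e : E) : M.firstVec ν τ e 0 = (M.first? τ e).map ν := rfl

theorem isFirstVec_firstVec (ν : E → V) (e : E) :
    IsFirstVec τ (ν e) (M.lab e) (M.loc e) ((M.succ? e).map (M.firstVec ν τ))
      ((M.receiver? e).map fun f => (M.loc f, M.firstVec ν τ f)) (M.firstVec ν τ e) := by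
  refine ⟨by simp [firstVec, first?_nil], fun j => ?_⟩
  have hdrop : τ.drop j = τ.get j :: τ.drop (j + 1) := List.drop_eq_getElem_cons j.isLt
  simp only [firstVec, Fin.val_castSucc, Fin.val_succ]
  rw [hdrop, first?_cons, firstStep_map]
  simp only [Option.map_map, Function.comp_def, Prod.map_apply, id, firstVec, Fin.val_castSucc,
    Fin.val_succ, hdrop]

theorem eq_firstVec_of_isFirstVec {ν : E → V} {X : E → FirstVec τ V}
    (hX : ∀ e, IsFirstVec τ (ν e) (M.lab e) (M.loc e) ((M.succ? e).map X)
      ((M.receiver? e).map fun f => (M.loc f, X f)) (X e)) :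
    X = M.firstVec ν τ := by
  funext e
  induction e using M.wellFounded_gt.induction with
  | _ e ih =>
    have hsucc : (M.succ? e).map X = (M.succ? e).map (M.firstVec ν τ) :=
      Option.map_congr fun f hf => ih f (M.lt_of_next (succ?_eq_some.1 hf))
    have hrecv : ((M.receiver? e).map fun f => (M.loc f, X f)) =
        (M.receiver? e).map fun f => (M.loc f, M.firstVec ν τ f) :=
      Option.map_congr fun f hf => by rw [ih f (M.lt_of_msg (receiver?_eq_some.1 hf))]
    exact (hX e).unique (hsucc ▸ hrecv ▸ M.isFirstVec_firstVec ν e)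

theorem isFirst_iff {e : E} {x : ExtEv E} :
    IsFirst M τ e x ↔ x = ofOption₂ (some (M.first? τ e)) := by
  rcases h : M.first? τ e with _ | g <;> cases x
  · exact ⟨nofun, nofun⟩
  · exact ⟨fun hx => (nomatch h.symm.trans (first?_eq_some.2 hx)), nofun⟩
  · exact ⟨fun _ => rfl, fun _ => first?_eq_none.1 h⟩
  · exact ⟨nofun, nofun⟩
  · rw [← first?_eq_some, h]
    simp [ofOption₂, eq_comm]
  · exact ⟨fun hx => (nomatch h.symm.trans (first?_eq_none.2 hx)), nofun⟩

theorem isLast_iff_first?_dual {π : PathExpr P A} {e g : E} :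
    IsLast M π e (.evt g) ↔ M.dual.first? (PathExpr.dual π) e = some g := by
  simp only [first?_eq_some, IsFirst, IsLast, pathSem_dual, dual_le]

theorem isLast_bot_iff_first?_dual {π : PathExpr P A} {e : E} :
    IsLast M π e .bot ↔ M.dual.first? (PathExpr.dual π) e = none := by
  simp only [first?_eq_none, IsLast, pathSem_dual]

variable (M) in
/-- `f_{π,π'}(e)`, to be read through `ofOption₂`. -/
noncomputable def firstOfLast? (π π' : PathExpr P A) (e : E) : Option (Option E) :=
  (M.dual.first? (PathExpr.dual π) e).map (M.first? π')

theorem isFa_iff {π π' : PathExpr P A} {e : E} {x : ExtEv E} :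
    IsFa M π π' e x ↔ x = ofOption₂ (M.firstOfLast? π π' e) := by
  simp only [IsFa, firstOfLast?, isLast_iff_first?_dual, isLast_bot_iff_first?_dual, isFirst_iff]
  rcases M.dual.first? (PathExpr.dual π) e with _ | g <;> simp [ofOption₂]

end MSC

namespace FaMachine

open MSC

section Machine

variable {P A : Type} (Θ : Type) (π π' : PathExpr P A)

/-- Entry `i` stands for `ξ₁(first_{π'}(last_σ))`, where `σ` is `π` without its last `i`
letters, with `none` for `⊥` and `some none` for `⊤`. -/
abbrev ZVec := FirstVec (PathExpr.dual π) (Option Θ)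

abbrev WVec := FirstVec π' Θ

/-- A message carries the `ZVec` of its sender and a guess of the `WVec` of its receiver. -/
abbrev Msg := ZVec Θ π × WVec Θ π'

/-- The state after an event: its two vectors and a guess of the `WVec` of its successor
(`none` if it is the last event of its process). -/
abbrev State := Option (ZVec Θ π × WVec Θ π' × Option (WVec Θ π'))

abbrev Act := CAct P (A × (Θ × ExtEv Θ)) (Msg Θ π π')

variable {Θ π π'}

def sentW : Act Θ π π' → Option (P × WVec Θ π')
  | .send _ m t => some (t, m.2)
  | _ => none

def receivedZ : Act Θ π π' → Option (P × ZVec Θ π)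
  | .recv _ m t => some (t, m.1)
  | _ => none

structure LocalOK (q p : P) (s : State Θ π π') (γ : Act Θ π π') (z : ZVec Θ π)
    (w : WVec Θ π') (g : Option (WVec Θ π')) : Prop where
  guess : ∀ x, s = some x → x.2.2 = some w
  first : IsFirstVec π' γ.labelOf.2.1 γ.labelOf.1 p g (sentW γ) w
  last : IsFirstVec (PathExpr.dual π) (w 0) γ.labelOf.1 p (s.map Prod.fst) (receivedZ γ) z
  send : ∀ a m t, γ = .send a m t → m.1 = z ∧ t ≠ p
  recv : ∀ a m t, γ = .recv a m t → m.2 = w ∧ t ≠ p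
  output : p = q → γ.labelOf.2.2 = ofOption₂ (z 0)

variable (Θ π π')

noncomputable abbrev machine [Fintype Θ] (q : P) : CFM P (A × (Θ × ExtEv Θ)) where
  Msg := Msg Θ π π'
  msgFin := inferInstance
  S := State Θ π π'
  sFin := inferInstance
  ι _ := none
  Δ p := {t | ∃ z w g, t.2.2 = some (z, w, g) ∧ LocalOK q p t.1 t.2.1 z w g}
  Acc := {s | ∀ p x, s p = some x → x.2.2 = none}
  wf_send := fun _ _ _ _ _ _ ⟨_, _, _, _, h⟩ => (h.send _ _ _ rfl).2
  wf_recv := fun _ _ _ _ _ _ ⟨_, _, _, _, h⟩ => (h.recv _ _ _ rfl).2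

end Machine

section Sound

variable {P A E Θ : Type} [Fintype Θ] {π π' : PathExpr P A} {q : P} {M : MSC P A E}
  {ξ : E → Θ × ExtEv Θ} {ρ : E → State Θ π π' × Act Θ π π' × State Θ π π'}
  {z : E → ZVec Θ π} {w : E → WVec Θ π'} {g : E → Option (WVec Θ π')}
  (hρ : (machine Θ π π' q).IsRun (M.relabel fun e => (M.lab e, ξ e)) ρ)
  (htgt : ∀ e, (ρ e).2.2 = some (z e, w e, g e))
  (hok : ∀ e, LocalOK q (M.loc e) (ρ e).1 (ρ e).2.1 (z e) (w e) (g e))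

include hρ htgt in
theorem source_eq (e : E) : (ρ e).1 = (M.dual.succ? e).map fun x => (z x, w x, g x) := by
  rcases hx : M.dual.succ? e with _ | x
  · exact hρ.2.2.1 e fun ⟨x, h⟩ => succ?_eq_none.1 hx x h
  · rw [← hρ.2.2.2.1 x e ((succ?_eq_some (M := M.dual)).1 hx), htgt, Option.map_some]

include hρ htgt hok in
theorem guess_eq (hacc : (machine Θ π π' q).IsAccepting (M.relabel fun e => (M.lab e, ξ e)) ρ)
    (e : E) : g e = (M.succ? e).map w := by
  rcases hf : M.succ? e with _ | f
  · obtain ⟨s, hs, hfin⟩ := hacc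
    obtain ⟨e', he', hlast, hse'⟩ := (hfin (M.loc e)).1 ⟨e, rfl⟩
    obtain rfl := M.eq_of_no_next (fun f h => hlast ⟨f, h⟩) (succ?_eq_none.1 hf) he'
    exact hs _ _ (by rw [hse', htgt])
  · refine (hok f).guess (z e, w e, g e) ?_
    rw [source_eq hρ htgt, (succ?_eq_some (M := M.dual)).2 ((succ?_eq_some (M := M)).1 hf),
      Option.map_some]

include hρ hok in
theorem sentW_eq (e : E) : sentW (ρ e).2.1 = (M.receiver? e).map fun f => (M.loc f, w f) := by
  rcases hf : M.receiver? e with _ | f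
  · by_cases hr : ∃ x, M.msg x e
    · obtain ⟨x, hx⟩ := hr
      obtain ⟨m, -, hrecv⟩ := hρ.2.2.2.2.2 x e hx
      rw [hrecv]; rfl
    · obtain ⟨a, ha⟩ := hρ.2.2.2.2.1 e (fun ⟨f, h⟩ => receiver?_eq_none.1 hf f h) hr
      rw [ha]; rfl
  · obtain ⟨m, hsend, hrecv⟩ := hρ.2.2.2.2.2 e f (receiver?_eq_some.1 hf)
    rw [hsend]
    exact congrArg (some ∘ Prod.mk _) ((hok f).recv _ _ _ hrecv).1

include hρ hok in
theorem receivedZ_eq (e : E) :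
    receivedZ (ρ e).2.1 = (M.dual.receiver? e).map fun x => (M.loc x, z x) := by
  rcases hx : M.dual.receiver? e with _ | x
  · by_cases hs : ∃ f, M.msg e f
    · obtain ⟨f, hf⟩ := hs
      obtain ⟨m, hsend, -⟩ := hρ.2.2.2.2.2 e f hf
      rw [hsend]; rfl
    · obtain ⟨a, ha⟩ := hρ.2.2.2.2.1 e hs fun ⟨x, h⟩ => receiver?_eq_none.1 hx x h
      rw [ha]; rfl
  · obtain ⟨m, hsend, hrecv⟩ := hρ.2.2.2.2.2 x e ((receiver?_eq_some (M := M.dual)).1 hx)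
    rw [hrecv]
    exact congrArg (some ∘ Prod.mk _) ((hok x).send _ _ _ hsend).1

include hρ in
theorem output_eq_of_isAccepting
    (hacc : (machine Θ π π' q).IsAccepting (M.relabel fun e => (M.lab e, ξ e)) ρ)
    {e : E} (he : M.loc e = q) :
    (ξ e).2 = ofOption₂ ((M.firstOfLast? π π' e).map (Option.map fun g => (ξ g).1)) := by
  have hΔ : ∀ e, ∃ z w g, (ρ e).2.2 = some (z, w, g) ∧
      LocalOK q (M.loc e) (ρ e).1 (ρ e).2.1 z w g := hρ.1
  choose z w g htgt hok using hΔ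
  have hlab (e : E) : (ρ e).2.1.labelOf = (M.lab e, ξ e) := hρ.2.1 e
  have hw : w = M.firstVec (fun e => (ξ e).1) π' := eq_firstVec_of_isFirstVec fun e => by
    simpa only [hlab, guess_eq hρ htgt hok hacc, sentW_eq hρ hok] using (hok e).first
  have hz : z = M.dual.firstVec (fun e => (M.first? π' e).map fun g => (ξ g).1)
      (PathExpr.dual π) := eq_firstVec_of_isFirstVec fun e => by
    have := (hok e).last
    simp only [hlab, source_eq hρ htgt, receivedZ_eq hρ hok, hw, firstVec_zero, Option.map_map,
      Function.comp_def] at this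
    exact this
  simpa only [hlab, hz, firstVec_zero, firstOfLast?, Option.map_map, Function.comp_def] using
    (hok e).output he

end Sound

section Complete

variable {P A E Θ : Type} (π π' : PathExpr P A) (M : MSC P A E) (ξ : E → Θ × ExtEv Θ)

noncomputable def runW (e : E) : WVec Θ π' := M.firstVec (fun e => (ξ e).1) π' e

noncomputable def runZ (e : E) : ZVec Θ π :=
  M.dual.firstVec (fun e => (M.first? π' e).map fun g => (ξ g).1) (PathExpr.dual π) e

noncomputable def runState (e : E) : ZVec Θ π × WVec Θ π' × Option (WVec Θ π') :=
  (runZ π π' M ξ e, runW π' M ξ e, (M.succ? e).map (runW π' M ξ))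

noncomputable def runAct (e : E) : Act Θ π π' :=
  match M.receiver? e, M.dual.receiver? e with
  | some f, _ => .send (M.lab e, ξ e) (runZ π π' M ξ e, runW π' M ξ f) (M.loc f)
  | none, some x => .recv (M.lab e, ξ e) (runZ π π' M ξ x, runW π' M ξ e) (M.loc x)
  | none, none => .internal (M.lab e, ξ e)

noncomputable def run (e : E) : State Θ π π' × Act Θ π π' × State Θ π π' :=
  ((M.dual.succ? e).map (runState π π' M ξ), runAct π π' M ξ e, some (runState π π' M ξ e))

variable {M}

theorem runAct_of_msg {e f : E} (h : M.msg e f) :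
    runAct π π' M ξ e = .send (M.lab e, ξ e) (runZ π π' M ξ e, runW π' M ξ f) (M.loc f) ∧
      runAct π π' M ξ f = .recv (M.lab f, ξ f) (runZ π π' M ξ e, runW π' M ξ f) (M.loc e) := by
  have hf : M.receiver? f = none := receiver?_eq_none_of_msg h
  have he : M.dual.receiver? f = some e := (receiver?_eq_some (M := M.dual)).2 h
  simp only [runAct, receiver?_eq_some.2 h, hf, he, and_self]

theorem runAct_of_no_msg {e : E} (hs : ¬ ∃ f, M.msg e f) (hr : ¬ ∃ x, M.msg x e) :
    runAct π π' M ξ e = .internal (M.lab e, ξ e) := by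
  have h₁ : M.receiver? e = none := receiver?_eq_none.2 fun f h => hs ⟨f, h⟩
  have h₂ : M.dual.receiver? e = none := receiver?_eq_none.2 fun x h => hr ⟨x, h⟩
  simp only [runAct, h₁, h₂]

theorem runAct_labelOf (e : E) : (runAct π π' M ξ e).labelOf = (M.lab e, ξ e) := by
  unfold runAct; split <;> rfl

theorem sentW_runAct (e : E) :
    sentW (runAct π π' M ξ e) = (M.receiver? e).map fun f => (M.loc f, runW π' M ξ f) := by
  unfold runAct; split <;> simp_all [sentW]

theorem receivedZ_runAct (e : E) :
    receivedZ (runAct π π' M ξ e) =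
      (M.dual.receiver? e).map fun x => (M.loc x, runZ π π' M ξ x) := by
  rcases h : M.receiver? e with _ | f
  · unfold runAct; split <;> simp_all [receivedZ]
  · have := M.dual.receiver?_eq_none_of_msg ((receiver?_eq_some (M := M)).1 h)
    simp only [runAct, h, this, receivedZ, Option.map_none]

theorem localOK_runAct {q : P}
    (hξ : ∀ e, M.loc e = q →
      (ξ e).2 = ofOption₂ ((M.firstOfLast? π π' e).map (Option.map fun g => (ξ g).1)))
    (e : E) :
    LocalOK q (M.loc e) ((M.dual.succ? e).map (runState π π' M ξ)) (runAct π π' M ξ e)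
      (runZ π π' M ξ e) (runW π' M ξ e) ((M.succ? e).map (runW π' M ξ)) where
  guess x hx := by
    obtain ⟨y, hy, rfl⟩ := Option.map_eq_some_iff.1 hx
    simp only [runState, (succ?_eq_some (M := M)).2 ((succ?_eq_some (M := M.dual)).1 hy),
      Option.map_some]
  first := by
    rw [runAct_labelOf, sentW_runAct]
    exact M.isFirstVec_firstVec _ e
  last := by
    rw [runAct_labelOf, receivedZ_runAct, Option.map_map]
    exact M.dual.isFirstVec_firstVec _ e
  send a m t h := by
    unfold runAct at h
    split at h <;> cases h
    rename_i f _ hf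
    exact ⟨rfl, fun h => M.msg_loc (receiver?_eq_some.1 hf) h.symm⟩
  recv a m t h := by
    unfold runAct at h
    split at h <;> cases h
    rename_i x _ hx
    exact ⟨rfl, M.msg_loc ((receiver?_eq_some (M := M.dual)).1 hx)⟩
  output h := by
    rw [runAct_labelOf, hξ e h]
    simp only [runZ, firstVec_zero, firstOfLast?, Option.map_map, Function.comp_def]

theorem isRun_run [Fintype Θ] {q : P}
    (hξ : ∀ e, M.loc e = q →
      (ξ e).2 = ofOption₂ ((M.firstOfLast? π π' e).map (Option.map fun g => (ξ g).1))) :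
    (machine Θ π π' q).IsRun (M.relabel fun e => (M.lab e, ξ e)) (run π π' M ξ) := by
  refine ⟨fun e => ⟨_, _, _, rfl, localOK_runAct π π' ξ hξ e⟩, runAct_labelOf π π' ξ,
    fun e he => ?_, fun e f h => ?_, fun e hs hr => ⟨_, runAct_of_no_msg π π' ξ hs hr⟩,
    fun e f h => ⟨_, runAct_of_msg π π' ξ h⟩⟩
  · show (M.dual.succ? e).map _ = none
    rw [succ?_eq_none.2 fun x hx => he ⟨x, hx⟩, Option.map_none]
  · show some _ = (M.dual.succ? f).map _
    rw [(succ?_eq_some (M := M.dual)).2 h, Option.map_some]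

theorem isAccepting_run [Fintype Θ] {q : P} :
    (machine Θ π π' q).IsAccepting (M.relabel fun e => (M.lab e, ξ e)) (run π π' M ξ) := by
  classical
  have hlast {p : P} (h : ∃ e, M.loc e = p) := (M.exists_last_of_loc h).choose_spec
  refine ⟨fun p => if h : ∃ e, M.loc e = p then
      some (runState π π' M ξ (M.exists_last_of_loc h).choose) else none,
    fun p x hx => ?_,
    fun p => ⟨fun h => ⟨_, (hlast h).1, fun ⟨f, hf⟩ => (hlast h).2 f hf, dif_pos h⟩,
      fun h => dif_neg h⟩⟩
  beta_reduce at hx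
  by_cases h : ∃ e, M.loc e = p
  · rw [dif_pos h, Option.some.injEq] at hx
    subst hx
    simp only [runState, succ?_eq_none.2 (hlast h).2, Option.map_none]
  · rw [dif_neg h] at hx
    cases hx

end Complete

theorem accepts_iff {P A E Θ : Type} [Fintype Θ] (π π' : PathExpr P A) (q : P) (M : MSC P A E)
    (ξ : E → Θ × ExtEv Θ) :
    AcceptsExt (machine Θ π π' q) M ξ ↔ ∀ e, M.loc e = q →
      (ξ e).2 = ofOption₂ ((M.firstOfLast? π π' e).map (Option.map fun g => (ξ g).1)) :=
  ⟨fun ⟨_, hρ, hacc⟩ _ he => output_eq_of_isAccepting hρ hacc he,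
    fun hξ => ⟨_, isRun_run π π' ξ hξ, isAccepting_run π π' ξ⟩⟩

end FaMachine

end Gossip

open Gossip in
theorem stmt14_general {P A : Type} (Θ : Type) [Fintype Θ]
    (q : P) (π π' : PathExpr P A) :
    ∃ C : CFM P (A × (Θ × ExtEv Θ)),
      ∀ (E : Type) (M : MSC P A E) (ξ : E → Θ × ExtEv Θ),
        AcceptsExt C M ξ ↔
          ∀ e : E, M.loc e = q → ∀ x : ExtEv E, IsFa M π π' e x →
            (ξ e).2 = extMap (fun g => (ξ g).1) x := by
  refine ⟨FaMachine.machine Θ π π' q, fun E M ξ => ?_⟩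
  simp only [FaMachine.accepts_iff, MSC.isFa_iff, forall_eq, extMap_ofOption₂]

open Gossip in
/-- Lemma 6: for `π, π' ∈ Π_{p,q}`, there is a CFM recognizing
exactly the extended MSCs `(M, ξ)` with `ξ(e) = (ξ₁(e), ξ₂(e))` such that
`ξ₂(e) = ξ₁(f_{π,π'}(e))` for all `e ∈ E_q` (with `ξ₁(⊥) = ⊥`, `ξ₁(⊤) = ⊤`). -/
theorem stmt14 {P A : Type} [Fintype P] [Fintype A] (Θ : Type) [Fintype Θ]
    (p q : P) (π π' : PathExpr P A)
    (hπ : pcomp π p q) (hπ' : pcomp π' p q) :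
    ∃ C : CFM P (A × (Θ × ExtEv Θ)),
      ∀ (E : Type) (M : MSC P A E) (ξ : E → Θ × ExtEv Θ),
        AcceptsExt C M ξ ↔
          ∀ e : E, M.loc e = q → ∀ x : ExtEv E, IsFa M π π' e x →
            (ξ e).2 = extMap (fun g => (ξ g).1) x :=
  stmt14_general Θ q π π'
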